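/- Let P be a numerical semigroup with msg(P) = {n₁ < n₂ < ⋯ < n_e}, let k ∈ {2, …, e} be such that n_k + n₁ > n_e and n_k + n₁ ∉ ⟨{n₁,…,n_e} ∖ {n_k}⟩, and let H = ⟨({n₁,…,n_e} ∖ {n_k}) ∪ {n_k + n₁}⟩. Then H ⊊ P, F(P) ≤ F(H), and g(P) < g(H). -/

import Mathlib

open scoped Pointwise

/-- A numerical semigroup: an additive submonoid of ℕ with finite complement. -/
def IsNumericalSemigroup (S : Set ℕ) : Prop :=
  0 ∈ S ∧ (∀ a ∈ S, ∀ b ∈ S, a + b ∈ S) ∧ Sᶜ.Finite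

/-- Multiplicity: the least positive element. -/
noncomputable def mult (S : Set ℕ) : ℕ := sInf (S \ {0})

/-- Minimal system of generators: (S∖{0}) ∖ ((S∖{0})+(S∖{0})). -/
def msg (S : Set ℕ) : Set ℕ := (S \ {0}) \ ((S \ {0}) + (S \ {0}))

/-- Embedding dimension: cardinality of the minimal system of generators. -/
noncomputable def edim (S : Set ℕ) : ℕ := (msg S).ncard

/-- The submonoid of (ℕ,+) generated by a set, as a set. -/
def genSet (B : Set ℕ) : Set ℕ := (AddSubmonoid.closure B : Set ℕ)

/-- Packed numerical semigroup: msg(S) ⊆ {m(S),…,2m(S)−1}. -/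
def IsPacked (S : Set ℕ) : Prop := msg S ⊆ Set.Icc (mult S) (2 * mult S - 1)

/-- L(m,e): numerical semigroups with multiplicity m and embedding dimension e. -/
def Lset (m e : ℕ) : Set (Set ℕ) :=
  {S | IsNumericalSemigroup S ∧ mult S = m ∧ edim S = e}

/-- C(m,e): packed numerical semigroups in L(m,e). -/
def Cset (m e : ℕ) : Set (Set ℕ) := {S ∈ Lset m e | IsPacked S}

/-- φ(S): the monoid generated by {m + (x mod m) : x ∈ msg(S)}, m = mult S. -/
noncomputable def phi (S : Set ℕ) : Set ℕ :=
  genSet ((fun x => mult S + x % mult S) '' msg S)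

/-- The class [S] = {T ∈ L(m,e) : φ(T) = φ(S)}. -/
def classOf (m e : ℕ) (S : Set ℕ) : Set (Set ℕ) := {T ∈ Lset m e | phi T = phi S}

/-- Frobenius number: the largest element of the complement. -/
noncomputable def Frob (S : Set ℕ) : ℕ := sSup Sᶜ

/-- Genus: the cardinality of the complement. -/
noncomputable def genus (S : Set ℕ) : ℕ := Sᶜ.ncard

/-- The Apéry set of n in S. -/
def Ap (S : Set ℕ) (n : ℕ) : Set ℕ := {s ∈ S | ¬ ∃ t ∈ S, s = t + n}

/-- Minimal elements of a set in a partial order. -/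
def minimalsOf {β : Type*} [PartialOrder β] (X : Set β) : Set β :=
  {x ∈ X | ∀ y ∈ X, y ≤ x → y = x}


/-
Write `G = msg P`, `x = n_k`, `m = n₁`. Replacing the generator `x` by `x + m` loses each generator
`g` only up to a multiple of `m`: `(m + 1) * g ∈ H`, hence `(m + 1) * p ∈ H` for all `p ∈ P`.
Together with `m ∈ H` this fills every residue class mod `m` from some point on, so `Hᶜ` is finite.
And `x ∉ H`: a representation of `x` in `H` cannot use `x + m > x`, so it would put `x`, and then
`x + m`, in `⟨G ∖ {x}⟩`. Thus `H ⊊ P` with finite complements, and the complement only grows.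
-/

lemma subset_closure_msg (S : Set ℕ) : S ⊆ AddSubmonoid.closure (msg S) := by
  intro p hp
  induction p using Nat.strong_induction_on with
  | _ p ih =>
    rcases Nat.eq_zero_or_pos p with rfl | hpos
    · exact zero_mem _
    by_cases hp_msg : p ∈ msg S
    · exact AddSubmonoid.subset_closure hp_msg
    obtain ⟨a, ⟨ha, ha0⟩, b, ⟨hb, hb0⟩, hab⟩ : p ∈ (S \ {0}) + (S \ {0}) := by
      by_contra hsum
      exact hp_msg ⟨⟨hp, by simpa using hpos.ne'⟩, hsum⟩
    simp only [Set.mem_singleton_iff] at ha0 hb0 hab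
    rw [← hab]
    exact add_mem (ih a (by omega) ha) (ih b (by omega) hb)

namespace IsNumericalSemigroup

variable {S : Set ℕ}

lemma genSet_subset (hS : IsNumericalSemigroup S) {B : Set ℕ} (hB : B ⊆ S) : genSet B ⊆ S :=
  AddSubmonoid.closure_le (S := ⟨⟨S, fun {a b} ha hb => hS.2.1 a ha b hb⟩, hS.1⟩) |>.mpr hB

lemma mem_of_Frob_lt (hS : IsNumericalSemigroup S) {p : ℕ} (hp : Frob S < p) : p ∈ S := by
  by_contra hpS
  exact hp.not_ge (le_csSup hS.2.2.bddAbove hpS)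

end IsNumericalSemigroup

lemma Frob_le_Frob_of_subset {S T : Set ℕ} (hST : S ⊆ T) (hS : Sᶜ.Finite) : Frob T ≤ Frob S :=
  csSup_le_csSup' hS.bddAbove (Set.compl_subset_compl.mpr hST)

lemma genus_lt_genus_of_ssubset {S T : Set ℕ} (hST : S ⊂ T) (hS : Sᶜ.Finite) :
    genus T < genus S :=
  Set.ncard_lt_ncard (compl_lt_compl_iff_lt.mpr hST) hS

/-- For `N ≥ (m + 1) * (c + m)`, write `N = (m + 1) * p + d * m` with `p ≡ N - c (mod m)`,
`c ≤ p < c + m`. -/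
lemma compl_subset_Iio_of_mul_succ_mem (H : AddSubmonoid ℕ) {m c : ℕ} (hm0 : 0 < m) (hm : m ∈ H)
    (h : ∀ p, c ≤ p → (m + 1) * p ∈ H) : (H : Set ℕ)ᶜ ⊆ Set.Iio ((m + 1) * (c + m)) := by
  intro N hN
  by_contra hNB
  simp only [Set.mem_Iio, not_lt] at hNB
  apply hN
  set r := (N - c) % m
  set q := (N - c) / m
  have hr : r < m := Nat.mod_lt _ hm0
  have hdiv : m * q + r = N - c := Nat.div_add_mod _ _
  have hcN : c ≤ N := le_trans (by nlinarith) hNB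
  have hq : c + r ≤ q := by
    have hmr : m * r < m * m := Nat.mul_lt_mul_of_pos_left hr hm0
    have : m * (c + r) < m * q := by
      zify [hcN] at hdiv hmr hNB ⊢
      nlinarith
    exact (Nat.lt_of_mul_lt_mul_left this).le
  obtain ⟨d, hd⟩ := Nat.exists_eq_add_of_le hq
  have hN_eq : N = (m + 1) * (c + r) + d • m := by
    rw [smul_eq_mul]
    rw [hd] at hdiv
    zify [hcN] at hdiv ⊢
    linarith
  rw [hN_eq]
  exact add_mem (h _ (Nat.le_add_right c r)) (nsmul_mem hm d)

section ReplaceGenerator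

variable {G : Set ℕ} {x m : ℕ}

lemma mul_succ_mem_closure_sdiff_union_add (hm : m ∈ G \ {x}) (hx : 0 < x) {p : ℕ}
    (hp : p ∈ AddSubmonoid.closure G) :
    (m + 1) * p ∈ AddSubmonoid.closure (G \ {x} ∪ {x + m}) := by
  set H := AddSubmonoid.closure (G \ {x} ∪ {x + m})
  have hmH : m ∈ H := AddSubmonoid.subset_closure (Or.inl hm)
  suffices AddSubmonoid.closure G ≤ H.comap (AddMonoidHom.mulLeft (m + 1)) from this hp
  rw [AddSubmonoid.closure_le]
  intro g hg
  change (m + 1) * g ∈ H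
  by_cases hgx : g = x
  · subst hgx
    have hsplit : (m + 1) * g = (g + m) + (g - 1) • m := by
      rw [smul_eq_mul]
      obtain ⟨g, rfl⟩ := Nat.exists_eq_add_of_lt hx
      simp only [Nat.add_sub_cancel]
      ring
    rw [hsplit]
    exact add_mem (AddSubmonoid.subset_closure (Or.inr rfl)) (nsmul_mem hmH _)
  · have hgH : g ∈ H := AddSubmonoid.subset_closure (Or.inl ⟨hg, hgx⟩)
    rw [← smul_eq_mul]
    exact nsmul_mem hgH (m + 1)

lemma notMem_closure_sdiff_union_add (hm : m ∈ G \ {x}) (hm0 : 0 < m)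
    (hnot : x + m ∉ AddSubmonoid.closure (G \ {x})) :
    x ∉ AddSubmonoid.closure (G \ {x} ∪ {x + m}) := by
  rw [AddSubmonoid.closure_union, AddSubmonoid.mem_sup]
  rintro ⟨y, hy, _, hc, hyc⟩
  obtain ⟨c, rfl⟩ := AddSubmonoid.mem_closure_singleton.mp hc
  rcases Nat.eq_zero_or_pos c with rfl | hc0
  · rw [zero_smul, add_zero] at hyc
    subst hyc
    exact hnot (add_mem hy (AddSubmonoid.subset_closure hm))
  · have hle : x + m ≤ c • (x + m) := by
      rw [smul_eq_mul]
      exact Nat.le_mul_of_pos_left _ hc0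
    omega

lemma finite_compl_closure_sdiff_union_add {P : Set ℕ} (hP : IsNumericalSemigroup P)
    (hPG : P ⊆ AddSubmonoid.closure G) (hm : m ∈ G \ {x}) (hm0 : 0 < m) (hx : 0 < x) :
    (AddSubmonoid.closure (G \ {x} ∪ {x + m}) : Set ℕ)ᶜ.Finite :=
  (Set.finite_Iio _).subset <|
    compl_subset_Iio_of_mul_succ_mem (c := Frob P + 1) _ hm0
      (AddSubmonoid.subset_closure (Or.inl hm)) fun _ hp =>
        mul_succ_mem_closure_sdiff_union_add hm hx (hPG (hP.mem_of_Frob_lt hp))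

end ReplaceGenerator

/-- Proposition 12: for H = ⟨({n₁,…,n_e}∖{n_k}) ∪ {n_k + n₁}⟩
with k ∈ {2,…,e}, n_k + n₁ > n_e and n_k + n₁ ∉ ⟨{n₁,…,n_e}∖{n_k}⟩, one has
H ⊊ P, F(P) ≤ F(H) and g(P) < g(H). -/
theorem stmt9 (e : ℕ) (h2 : 2 ≤ e) (P : Set ℕ) (hP : IsNumericalSemigroup P)
    (n : Fin e → ℕ) (hmono : StrictMono n) (hmsg : msg P = Set.range n)
    (k : Fin e) (hk : k.val ≠ 0)
    (hnot : n k + n ⟨0, by omega⟩ ∉ genSet (Set.range n \ {n k})) :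
    genSet ((Set.range n \ {n k}) ∪ {n k + n ⟨0, by omega⟩}) ⊂ P ∧
    Frob P ≤ Frob (genSet ((Set.range n \ {n k}) ∪ {n k + n ⟨0, by omega⟩})) ∧
    genus P < genus (genSet ((Set.range n \ {n k}) ∪ {n k + n ⟨0, by omega⟩})) := by
  have hG : Set.range n ⊆ P \ {0} := hmsg ▸ Set.sdiff_subset
  have hpos : ∀ i, 0 < n i := fun i => Nat.pos_of_ne_zero (hG ⟨i, rfl⟩).2
  have hmG : n ⟨0, by omega⟩ ∈ Set.range n \ {n k} :=
    ⟨⟨_, rfl⟩, fun h => hk (congrArg Fin.val (hmono.injective h)).symm⟩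
  have hPG : P ⊆ AddSubmonoid.closure (Set.range n) := hmsg ▸ subset_closure_msg P
  have hHP : genSet (Set.range n \ {n k} ∪ {n k + n ⟨0, by omega⟩}) ⊆ P :=
    hP.genSet_subset <| Set.union_subset (Set.sdiff_subset.trans fun _ h => (hG h).1) <|
      Set.singleton_subset_iff.mpr (hP.2.1 _ (hG ⟨k, rfl⟩).1 _ (hG ⟨_, rfl⟩).1)
  have hHfin := finite_compl_closure_sdiff_union_add hP hPG hmG (hpos _) (hpos k)
  have hHP_ssubset : genSet (Set.range n \ {n k} ∪ {n k + n ⟨0, by omega⟩}) ⊂ P :=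
    Set.ssubset_iff_of_subset hHP |>.mpr
      ⟨n k, (hG ⟨k, rfl⟩).1, notMem_closure_sdiff_union_add hmG (hpos _) hnot⟩
  exact ⟨hHP_ssubset, Frob_le_Frob_of_subset hHP hHfin, genus_lt_genus_of_ssubset hHP_ssubset hHfin⟩
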